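/- arXiv:2205.03593 — 3 statements merged into one kernel-verified Lean document; each statement's English description precedes it below -/
import Mathlib

section
/- Let p be a prime, V a finite-dimensional vector space over 𝔽_p of dimension d, H ≤ GL(V) acting irreducibly on V, A a subgroup of H, W a nontrivial subspace of V, and v a nonzero vector of V. If W ⊆ m·(v^A ∪ {0}) for some positive integer m, then dm·(v^H ∪ {0}) = V. -/
open Pointwise

/-- The `n`-fold sumset of a set in an additive group (`foldAdd 0 Δ = {0}`). -/
def foldAdd {V : Type*} [AddCommGroup V] : ℕ → Set V → Set V
  | 0, _ => {0}
  | n + 1, Δ => foldAdd n Δ + Δ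

lemma mem_foldAdd_add {V : Type*} [AddCommGroup V] {Δ : Set V} {a : ℕ} {x : V}
    (hx : x ∈ foldAdd a Δ) : ∀ {b : ℕ} {y : V}, y ∈ foldAdd b Δ → x + y ∈ foldAdd (a + b) Δ
  | 0, y, hy => by
      have hy0 : y = 0 := hy
      subst hy0; simpa using hx
  | b + 1, y, hy => by
      rw [show foldAdd (b+1) Δ = foldAdd b Δ + Δ from rfl, Set.mem_add] at hy
      obtain ⟨y', hy', z, hz, rfl⟩ := hy
      have h1 : x + y' ∈ foldAdd (a + b) Δ := mem_foldAdd_add hx hy'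
      show x + (y' + z) ∈ foldAdd (a + b) Δ + Δ
      have h2 := Set.add_mem_add h1 hz
      simpa [add_assoc] using h2

lemma foldAdd_map {K V : Type*} [Field K] [AddCommGroup V] [Module K V]
    (g : V →ₗ[K] V) {Δ₁ Δ₂ : Set V} (h : ∀ x ∈ Δ₁, g x ∈ Δ₂) :
    ∀ {n : ℕ} {x : V}, x ∈ foldAdd n Δ₁ → g x ∈ foldAdd n Δ₂
  | 0, x, hx => by
      have hx0 : x = 0 := hx
      subst hx0; simp [foldAdd]
  | n + 1, x, hx => by
      rw [show foldAdd (n+1) Δ₁ = foldAdd n Δ₁ + Δ₁ from rfl, Set.mem_add] at hx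
      obtain ⟨y, hy, z, hz, rfl⟩ := hx
      have h1 : g y ∈ foldAdd n Δ₂ := foldAdd_map g h hy
      show g (y + z) ∈ foldAdd n Δ₂ + Δ₂
      rw [map_add]
      exact Set.add_mem_add h1 (h z hz)

lemma sum_mem_foldAdd {V : Type*} [AddCommGroup V] {Δ : Set V} {m : ℕ} :
    ∀ (n : ℕ) (f : Fin n → V), (∀ i, f i ∈ foldAdd m Δ) →
      (∑ i, f i) ∈ foldAdd (n * m) Δ
  | 0, f, hf => by simp [foldAdd]
  | n + 1, f, hf => by
      rw [Fin.sum_univ_castSucc]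
      have h1 := sum_mem_foldAdd n (fun i => f i.castSucc) (fun i => hf _)
      have := mem_foldAdd_add h1 (hf (Fin.last n))
      simpa [add_mul] using this

theorem stmt_4 (p d m : ℕ) [Fact p.Prime] {V : Type*} [AddCommGroup V]
    [Module (ZMod p) V] [FiniteDimensional (ZMod p) V]
    (hd : Module.finrank (ZMod p) V = d)
    (H A : Subgroup (V →ₗ[ZMod p] V)ˣ) (hAH : A ≤ H)
    (hirr : ∀ W : Submodule (ZMod p) V,
      (∀ g ∈ H, ∀ w ∈ W, (g : V →ₗ[ZMod p] V) w ∈ W) → W = ⊥ ∨ W = ⊤)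
    (W : Submodule (ZMod p) V) (hW : W ≠ ⊥) (v : V) (hv : v ≠ 0) (hm : 0 < m)
    (hsub : (W : Set V) ⊆
      foldAdd m ({w | ∃ g ∈ A, (g : V →ₗ[ZMod p] V) v = w} ∪ {0})) :
    foldAdd (d * m) ({w | ∃ g ∈ H, (g : V →ₗ[ZMod p] V) v = w} ∪ {0}) = Set.univ := by
  set ΔA : Set V := {w | ∃ g ∈ A, (g : V →ₗ[ZMod p] V) v = w} ∪ {0} with hΔA
  set ΔH : Set V := {w | ∃ g ∈ H, (g : V →ₗ[ZMod p] V) v = w} ∪ {0} with hΔH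
  -- pick a nonzero w ∈ W
  obtain ⟨w, hwW, hw0⟩ := Submodule.exists_mem_ne_zero_of_ne_bot hW
  -- orbit of w under H
  set S : Set V := {x | ∃ g ∈ H, (g : V →ₗ[ZMod p] V) w = x} with hS
  -- span of S is H-invariant, hence ⊤
  have hspan : Submodule.span (ZMod p) S = ⊤ := by
    have hinv : ∀ g ∈ H, ∀ x ∈ Submodule.span (ZMod p) S,
        (g : V →ₗ[ZMod p] V) x ∈ Submodule.span (ZMod p) S := by
      intro g hg x hx
      refine Submodule.span_induction
        (p := fun x _ => (g : V →ₗ[ZMod p] V) x ∈ Submodule.span (ZMod p) S) ?_ ?_ ?_ ?_ hx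
      · rintro y ⟨g', hg', rfl⟩
        refine Submodule.subset_span ⟨g * g', H.mul_mem hg hg', ?_⟩
        simp [Units.val_mul]
      · simp
      · intro a b _ _ ha hb
        rw [map_add]; exact Submodule.add_mem _ ha hb
      · intro c a _ ha
        rw [map_smul]; exact Submodule.smul_mem _ _ ha
    rcases hirr (Submodule.span (ZMod p) S) hinv with h | h
    · exfalso
      have hwS : w ∈ S := ⟨1, H.one_mem, by simp⟩
      have hmem : w ∈ Submodule.span (ZMod p) S := Submodule.subset_span hwS
      rw [h] at hmem
      exact hw0 ((Submodule.mem_bot _).mp hmem)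
    · exact h
  -- extract a basis from S
  obtain ⟨b, hbS, hbspan, hbli⟩ := exists_linearIndependent (ZMod p) S
  rw [hspan] at hbspan
  have hbfin : b.Finite := hbli.setFinite
  haveI : Fintype b := hbfin.fintype
  let B : Module.Basis b (ZMod p) V :=
    Module.Basis.mk hbli (by rw [Subtype.range_coe]; exact hbspan.ge)
  have hcard : Fintype.card b = d := by
    rw [← hd, Module.finrank_eq_card_basis B]
  -- key: each scalar multiple of an element of S lies in foldAdd m ΔH
  have hkey : ∀ (c : ZMod p) (x : V), x ∈ S → c • x ∈ foldAdd m ΔH := by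
    rintro c x ⟨g, hg, rfl⟩
    have h1 : c • w ∈ (W : Set V) := W.smul_mem c hwW
    have h2 : c • w ∈ foldAdd m ΔA := hsub h1
    have h3 : (g : V →ₗ[ZMod p] V) (c • w) ∈ foldAdd m ΔH := by
      refine foldAdd_map (g : V →ₗ[ZMod p] V) ?_ h2
      rintro y (⟨a, ha, rfl⟩ | hy)
      · exact Or.inl ⟨g * a, H.mul_mem hg (hAH ha), by simp [Units.val_mul]⟩
      · simp only [Set.mem_singleton_iff] at hy
        subst hy
        right; simp
    rw [map_smul] at h3
    exact h3
  -- finish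
  apply Set.eq_univ_of_forall
  intro x
  let e : Fin d ≃ b := (Fintype.equivFinOfCardEq hcard).symm
  have hx : x = ∑ i : Fin d, (B.repr x (e i)) • B (e i) := by
    rw [Equiv.sum_comp e (fun j => (B.repr x j) • B j)]
    exact (B.sum_repr x).symm
  rw [hx]
  refine sum_mem_foldAdd d _ (fun i => ?_)
  have hmemS : (B (e i) : V) ∈ S := by
    rw [Module.Basis.mk_apply]
    exact hbS (e i).2
  exact hkey _ _ hmemS
end

section
/- Let p be an odd prime, K ≤ 𝔽_p^× nontrivial, S a transitive permutation group of degree d, and let m be the smallest positive integer with m·(K ∪ {0}) = 𝔽_p. Let Δ = {λ e_i : λ ∈ K, 1 ≤ i ≤ d} ⊆ 𝔽_p^d. Then the smallest positive integer n with n·(Δ ∪ {0}) = 𝔽_p^d equals m·d. -/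
open Pointwise

lemma foldAdd_subset_succ {V : Type*} [AddCommGroup V] {Γ : Set V} (h0 : (0:V) ∈ Γ)
    (n : ℕ) : foldAdd n Γ ⊆ foldAdd (n+1) Γ := fun x hx => by
  have : x + 0 ∈ foldAdd n Γ + Γ := Set.add_mem_add hx h0
  simpa [foldAdd] using this

lemma foldAdd_mono {V : Type*} [AddCommGroup V] {Γ : Set V} (h0 : (0:V) ∈ Γ)
    {a b : ℕ} (hab : a ≤ b) : foldAdd a Γ ⊆ foldAdd b Γ := by
  induction hab with
  | refl => exact subset_rfl
  | step h ih => exact ih.trans (foldAdd_subset_succ h0 _)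

lemma mem_foldAdd_pi {p d : ℕ} [NeZero d] (A : Set (ZMod p)) (n : ℕ)
    (w : Fin d → ZMod p) :
    w ∈ foldAdd n ({v : Fin d → ZMod p | ∃ a ∈ A, ∃ i : Fin d,
        v = a • (Pi.single i (1:ZMod p) : Fin d → ZMod p)} ∪ {0}) ↔
    ∃ f : Fin d → ℕ, (∑ i, f i) = n ∧ ∀ i, w i ∈ foldAdd (f i) (A ∪ {0}) := by
  have h0A : (0:ZMod p) ∈ A ∪ {0} := Set.mem_union_right _ rfl
  have i0 : Fin d := ⟨0, Nat.pos_of_ne_zero (NeZero.ne d)⟩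
  induction n generalizing w with
  | zero =>
    simp only [foldAdd]
    constructor
    · rintro rfl
      refine ⟨fun _ => 0, by simp, fun i => ?_⟩
      simp [foldAdd]
    · rintro ⟨f, hf, hw⟩
      have hf0 : ∀ i, f i = 0 := by
        intro i
        exact (Finset.sum_eq_zero_iff.mp hf) i (Finset.mem_univ i)
      funext i
      have := hw i
      rw [hf0 i] at this
      simpa [foldAdd] using this
  | succ n ih =>
    constructor
    · rintro ⟨v, hv, δ, hδ, rfl⟩
      obtain ⟨f, hf, hvf⟩ := ih v |>.mp hv
      rcases hδ with ⟨a, ha, i, rfl⟩ | hδ0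
      · refine ⟨Function.update f i (f i + 1), ?_, ?_⟩
        · rw [Finset.sum_update_of_mem (Finset.mem_univ i)]
          rw [← Finset.add_sum_erase _ f (Finset.mem_univ i), Finset.erase_eq] at hf
          omega
        · intro j
          by_cases hj : j = i
          · subst hj
            simp only [Function.update_self]
            have : v j + a ∈ foldAdd (f j) (A ∪ {0}) + (A ∪ {0}) :=
              Set.add_mem_add (hvf j) (Set.mem_union_left _ ha)
            simpa [foldAdd, Pi.single_eq_same] using this
          · have hz : (a • (Pi.single i (1:ZMod p) : Fin d → ZMod p)) j = 0 := by
              simp [Pi.single_eq_of_ne hj]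
            simp only [Pi.add_apply, hz, add_zero, Function.update_of_ne hj]
            exact hvf j
      · have hδ : δ = 0 := hδ0
        subst hδ
        refine ⟨Function.update f i0 (f i0 + 1), ?_, ?_⟩
        · rw [Finset.sum_update_of_mem (Finset.mem_univ i0)]
          rw [← Finset.add_sum_erase _ f (Finset.mem_univ i0), Finset.erase_eq] at hf
          omega
        · intro j
          by_cases hj : j = i0
          · subst hj
            simp only [Function.update_self, Pi.add_apply, Pi.zero_apply, add_zero]
            exact foldAdd_subset_succ h0A _ (hvf j)
          · simp only [Pi.add_apply, Pi.zero_apply, add_zero, Function.update_of_ne hj]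
            exact hvf j
    · rintro ⟨f, hf, hw⟩
      have : ∃ i, f i ≠ 0 := by
        by_contra h
        push_neg at h
        simp only [h, Finset.sum_const_zero] at hf
        omega
      obtain ⟨i, hi⟩ := this
      obtain ⟨k, hk⟩ := Nat.exists_eq_succ_of_ne_zero hi
      have hwi := hw i
      rw [hk] at hwi
      obtain ⟨y, hy, a, ha, hya⟩ := hwi
      refine ⟨Function.update w i y, ?_, a • (Pi.single i (1:ZMod p) : Fin d → ZMod p), ?_, ?_⟩
      · refine (ih _).mpr ⟨Function.update f i k, ?_, ?_⟩
        · rw [Finset.sum_update_of_mem (Finset.mem_univ i)]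
          rw [← Finset.add_sum_erase _ f (Finset.mem_univ i), Finset.erase_eq] at hf
          omega
        · intro j
          by_cases hj : j = i
          · subst hj; simpa using hy
          · simp only [Function.update_of_ne hj]
            exact hw j
      · rcases ha with ha | ha0
        · exact Set.mem_union_left _ ⟨a, ha, i, rfl⟩
        · have : a = 0 := ha0
          subst this
          exact Set.mem_union_right _ (by simp)
      · funext j
        by_cases hj : j = i
        · subst hj
          simp [Pi.single_eq_same, hya]
        · simp [Function.update_of_ne hj, Pi.single_eq_of_ne hj]

theorem stmt_12 (p d m : ℕ) [Fact p.Prime] [NeZero d] (hp : Odd p)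
    (K : Subgroup (ZMod p)ˣ) (hK : K ≠ ⊥)
    (hm : IsLeast {n | 0 < n ∧
      foldAdd n (((fun u : (ZMod p)ˣ => (u : ZMod p)) '' K) ∪ {0}) = Set.univ} m) :
    IsLeast {n | 0 < n ∧
      foldAdd n ({w : Fin d → ZMod p | ∃ μ ∈ K, ∃ i : Fin d,
          w = (μ : ZMod p) • (Pi.single i (1 : ZMod p) : Fin d → ZMod p)} ∪ {0}) =
        Set.univ} (m * d) := by
  set A : Set (ZMod p) := (fun u : (ZMod p)ˣ => (u : ZMod p)) '' K with hA
  have h0A : (0:ZMod p) ∈ A ∪ {0} := Set.mem_union_right _ rfl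
  have hΔ : {w : Fin d → ZMod p | ∃ μ ∈ K, ∃ i : Fin d,
      w = (μ : ZMod p) • (Pi.single i (1 : ZMod p) : Fin d → ZMod p)} =
      {v : Fin d → ZMod p | ∃ a ∈ A, ∃ i : Fin d,
        v = a • (Pi.single i (1:ZMod p) : Fin d → ZMod p)} := by
    ext v
    constructor
    · rintro ⟨μ, hμ, i, rfl⟩
      exact ⟨(μ : ZMod p), ⟨μ, hμ, rfl⟩, i, rfl⟩
    · rintro ⟨a, ⟨μ, hμ, rfl⟩, i, rfl⟩
      exact ⟨μ, hμ, i, rfl⟩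
  have hm1 : 0 < m := hm.1.1
  have hmA : foldAdd m (A ∪ {0}) = Set.univ := hm.1.2
  rw [hΔ]
  constructor
  · refine ⟨Nat.mul_pos hm1 (Nat.pos_of_ne_zero (NeZero.ne d)), ?_⟩
    apply Set.eq_univ_of_univ_subset
    intro w _
    refine (mem_foldAdd_pi A (m*d) w).mpr ⟨fun _ => m, ?_, fun i => ?_⟩
    · simp [Finset.sum_const, mul_comm]
    · rw [hmA]; trivial
  · rintro n ⟨hn, hcov⟩
    -- find x not reachable in m-1 steps
    have hne : foldAdd (m-1) (A ∪ {0}) ≠ Set.univ := by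
      rcases eq_or_lt_of_le (Nat.succ_le_of_lt hm1) with h1 | h1
      · have : m - 1 = 0 := by omega
        rw [this]
        intro h
        have : (1:ZMod p) ∈ (foldAdd 0 (A ∪ {0}) : Set (ZMod p)) := h ▸ Set.mem_univ _
        simp only [foldAdd, Set.mem_singleton_iff] at this
        exact one_ne_zero this
      · intro h
        have : m ≤ m - 1 := hm.2 ⟨by omega, h⟩
        omega
    obtain ⟨x, hx⟩ := Set.ne_univ_iff_exists_notMem _ |>.mp hne
    have hwx : (fun _ : Fin d => x) ∈ foldAdd n ({v : Fin d → ZMod p | ∃ a ∈ A, ∃ i : Fin d,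
        v = a • (Pi.single i (1:ZMod p) : Fin d → ZMod p)} ∪ {0}) := by
      rw [hcov]; trivial
    obtain ⟨f, hf, hw⟩ := (mem_foldAdd_pi A n _).mp hwx
    have hfm : ∀ i, m ≤ f i := by
      intro i
      by_contra h
      push_neg at h
      exact hx (foldAdd_mono h0A (by omega : f i ≤ m - 1) (hw i))
    calc m * d = ∑ _i : Fin d, m := by simp [Finset.sum_const, mul_comm]
    _ ≤ ∑ i, f i := Finset.sum_le_sum fun i _ => hfm i
    _ = n := hf
end

section
/- Let r ≥ 5 and p an odd prime not dividing r. With V and Δ as in the deleted permutation module setting, the smallest positive integer m such that m·(Δ ∪ {0}) = V satisfies m ≥ (p−1)(r−1)/4. -/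
/-! Measure `x : (ZMod p)^r` by `‖x‖ = ∑ₖ |xₖ|`, where `|a|` is the absolute value of the
representative of `a` in `(-p/2, p/2]`. This is subadditive and every element of `Δ ∪ {0}` has
norm at most `2`, so `m (Δ ∪ {0})` only contains vectors of norm at most `2m`. The vector with
`r - 1` coordinates equal to `(p - 1)/2` and coordinate sum `0` lies in `V` and has norm at least
`(r - 1)(p - 1)/2`. -/

open Pointwise

lemma ZMod.natAbs_valMinAbs_one_le (n : ℕ) : (1 : ZMod n).valMinAbs.natAbs ≤ 1 := by
  rcases n with - | n
  · rfl
  · exact ZMod.natAbs_min_of_le_div_two _ _ 1 (by simp [ZMod.coe_valMinAbs])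
      (ZMod.natAbs_valMinAbs_le _)

section Weight

variable {ι : Type*} [Fintype ι] {n : ℕ}

def weight (x : ι → ZMod n) : ℕ := ∑ k, (x k).valMinAbs.natAbs

@[simp]
lemma weight_zero : weight (0 : ι → ZMod n) = 0 := by
  simp [weight, ZMod.valMinAbs_zero]

@[simp]
lemma weight_neg (x : ι → ZMod n) : weight (-x) = weight x := by
  simp only [weight, Pi.neg_apply, ZMod.natAbs_valMinAbs_neg]

lemma weight_add_le (x y : ι → ZMod n) : weight (x + y) ≤ weight x + weight y := by
  rw [weight, weight, weight, ← Finset.sum_add_distrib]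
  exact Finset.sum_le_sum fun k _ =>
    (ZMod.natAbs_valMinAbs_add_le _ _).trans (Int.natAbs_add_le _ _)

lemma weight_sub_le (x y : ι → ZMod n) : weight (x - y) ≤ weight x + weight y := by
  simpa [sub_eq_add_neg] using weight_add_le x (-y)

@[simp]
lemma weight_single [DecidableEq ι] (i : ι) (a : ZMod n) :
    weight (Pi.single i a) = a.valMinAbs.natAbs := by
  rw [weight, Finset.sum_eq_single i (fun k _ hk => by simp [hk, ZMod.valMinAbs_zero])
    (by simp)]
  simp

lemma weight_single_sub_single_le [DecidableEq ι] (i j : ι) :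
    weight (Pi.single i 1 - Pi.single j 1 : ι → ZMod n) ≤ 2 := by
  have := ZMod.natAbs_valMinAbs_one_le n
  have := weight_sub_le (Pi.single i 1 : ι → ZMod n) (Pi.single j 1)
  simp only [weight_single] at this
  omega

lemma weight_le_of_mem_foldAdd {S : Set (ι → ZMod n)} {c : ℕ} (hS : ∀ s ∈ S, weight s ≤ c) :
    ∀ {k : ℕ} {x : ι → ZMod n}, x ∈ foldAdd k S → weight x ≤ k * c
  | 0, x, hx => by
    rw [foldAdd, Set.mem_singleton_iff] at hx
    simp [hx]
  | k + 1, _, ⟨y, hy, s, hs, rfl⟩ =>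
    calc weight (y + s) ≤ weight y + weight s := weight_add_le y s
      _ ≤ k * c + c := add_le_add (weight_le_of_mem_foldAdd hS hy) (hS s hs)
      _ = (k + 1) * c := by ring

/-- The vector `(c, …, c, c - |ι| c)`, with the exceptional coordinate at `i₀`. -/
lemma exists_sum_eq_zero_le_weight (i₀ : ι) {c : ℕ} (hc : c ≤ n / 2) :
    ∃ v : ι → ZMod n, ∑ k, v k = 0 ∧ (Fintype.card ι - 1) * c ≤ weight v := by
  classical
  set v : ι → ZMod n := (fun _ => (c : ZMod n)) - Pi.single i₀ ((Fintype.card ι * c : ℕ) : ZMod n)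
  have hv_coord : ∀ k ∈ Finset.univ.erase i₀, (v k).valMinAbs.natAbs = c := fun k hk => by
    simp [v, Finset.ne_of_mem_erase hk, ZMod.valMinAbs_natCast_of_le_half hc]
  refine ⟨v, by simp [v, Finset.sum_sub_distrib], ?_⟩
  calc (Fintype.card ι - 1) * c = ∑ k ∈ Finset.univ.erase i₀, (v k).valMinAbs.natAbs := by
        rw [Finset.sum_congr rfl hv_coord, Finset.sum_const,
          Finset.card_erase_of_mem (Finset.mem_univ _), Finset.card_univ, smul_eq_mul]
    _ ≤ weight v := Finset.sum_le_sum_of_subset (Finset.subset_univ _)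

end Weight

theorem stmt_14_general (p r m : ℕ) (hp : Odd p)
    (hm : IsLeast {n | 0 < n ∧ foldAdd n
      ({x : Fin r → ZMod p | ∃ i j : Fin r, i ≠ j ∧
          x = (Pi.single i (1 : ZMod p) : Fin r → ZMod p) -
            (Pi.single j (1 : ZMod p) : Fin r → ZMod p)} ∪ {0}) =
        {x : Fin r → ZMod p | ∑ k, x k = 0}} m) :
    (p - 1) * (r - 1) ≤ 4 * m := by
  rcases Nat.eq_zero_or_pos r with rfl | hr
  · simp
  obtain ⟨v, hv_sum, hv_weight⟩ :=
    exists_sum_eq_zero_le_weight (⟨0, hr⟩ : Fin r) (n := p) (c := (p - 1) / 2) (by omega)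
  have hv_weight_le : weight v ≤ m * 2 := by
    refine weight_le_of_mem_foldAdd ?_ (hm.1.2.symm.subset hv_sum)
    rintro s (⟨i, j, -, rfl⟩ | rfl)
    · exact weight_single_sub_single_le i j
    · simp
  obtain ⟨t, rfl⟩ := hp
  have hc : (2 * t + 1 - 1) / 2 = t := by omega
  rw [Fintype.card_fin, hc] at hv_weight
  rw [add_tsub_cancel_right]
  linarith

theorem stmt_14 (p r m : ℕ) [Fact p.Prime] (hp : Odd p) (hr : 5 ≤ r)
    (hpr : ¬ p ∣ r)
    (hm : IsLeast {n | 0 < n ∧ foldAdd n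
      ({x : Fin r → ZMod p | ∃ i j : Fin r, i ≠ j ∧
          x = (Pi.single i (1 : ZMod p) : Fin r → ZMod p) -
            (Pi.single j (1 : ZMod p) : Fin r → ZMod p)} ∪ {0}) =
        {x : Fin r → ZMod p | ∑ k, x k = 0}} m) :
    (p - 1) * (r - 1) ≤ 4 * m :=
  stmt_14_general p r m hp hm
end
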